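/- Starting from the empty safe justification J⁰ = (V, ∅, H_d), any maximal sequence of executable Justify steps (where each step J^{i+1} = Justify(J^i, v, dj) for some node v justifiable with dj) is finite and terminates in a safe justification J^k in which every node is justified; moreover the hypothesis H^k of J^k is the winning function of the parity game PG, and σ_{J^k,0} and σ_{J^k,1} are winning strategies for players 0 and 1 on their respective winning sets. -/

import Mathlib

attribute [local instance] Classical.propDecidable

noncomputable section

/-- A parity game: an edge relation `E`, an owner function, a priority
function; every node has at least one outgoing edge. -/
structure ParityGame (V : Type*) where
  E : V → V → Prop
  owner : V → Fin 2
  pr : V → ℕ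
  exists_succ : ∀ v, ∃ w, E v w

namespace ParityGame

variable {V : Type*}

/-- An infinite sequence of nodes following the relation `R`. -/
def IsInfPath (R : V → V → Prop) (π : ℕ → V) : Prop :=
  ∀ i, R (π i) (π (i + 1))

/-- `ρ 0, …, ρ n` is a finite sequence of nodes following `R`. -/
def IsFinPath (R : V → V → Prop) (ρ : ℕ → V) (n : ℕ) : Prop :=
  ∀ i < n, R (ρ i) (ρ (i + 1))

/-- A cycle following `R`: a nonempty finite path ending in its starting node. -/
def IsCycle (R : V → V → Prop) (ρ : ℕ → V) (n : ℕ) : Prop :=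
  0 < n ∧ IsFinPath R ρ n ∧ ρ n = ρ 0

/-- `w` is reachable from `v` following `R` (in zero or more steps). -/
def Reaches (R : V → V → Prop) (v w : V) : Prop :=
  Relation.ReflTransGen R v w

/-- The infinite play `π` is won by player `α`: the highest priority
occurring infinitely often in the play has parity `α`. -/
def InfWonBy (G : ParityGame V) (π : ℕ → V) (α : Fin 2) : Prop :=
  ∃ p : ℕ, {i | G.pr (π i) = p}.Infinite ∧
    (∀ q : ℕ, {i | G.pr (π i) = q}.Infinite → q ≤ p) ∧ Fin.ofNat 2 p = α

/-- A play is consistent with a (partial, memoryless) strategy given as a set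
of edges: whenever the play is at a node where the strategy selects an edge,
the play follows that edge. -/
def Consistent (σ : V → V → Prop) (π : ℕ → V) : Prop :=
  ∀ i u, σ (π i) u → π (i + 1) = u

/-- Consistency of a finite play `ρ 0, …, ρ n` with a strategy. -/
def ConsistentFin (σ : V → V → Prop) (ρ : ℕ → V) (n : ℕ) : Prop :=
  ∀ i < n, ∀ u, σ (ρ i) u → ρ (i + 1) = u

/-- The default hypothesis: each node is won by the parity of its priority. -/
def Hd (G : ParityGame V) (v : V) : Fin 2 := Fin.ofNat 2 (G.pr v)

/-- `dj` is a direct justification for player `α` to win node `v`: a set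
containing exactly one outgoing edge of `v` if `α` owns `v`, and all outgoing
edges of `v` otherwise. -/
def IsDJ (G : ParityGame V) (v : V) (α : Fin 2) (dj : Set (V × V)) : Prop :=
  (G.owner v = α → ∃ w, G.E v w ∧ dj = {(v, w)}) ∧
  (G.owner v ≠ α → dj = {p | p.1 = v ∧ G.E v p.2})

/-- `dj` wins `v` for `α` under hypothesis `H`. -/
def WinsDJ (G : ParityGame V) (H : V → Fin 2) (v : V) (α : Fin 2)
    (dj : Set (V × V)) : Prop :=
  G.IsDJ v α dj ∧ ∀ p ∈ dj, H p.2 = α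

/-- The parity game obtained from `G` and the parameter function `P` by
replacing, in every parameter `v`, the outgoing edges of `v` by the self-loop
`(v, v)` and the priority of `v` by its assigned winner `P v`. -/
def paramGame (G : ParityGame V) (P : V → Option (Fin 2)) : ParityGame V where
  E := fun v w => if P v = none then G.E v w else w = v
  owner := G.owner
  pr := fun v => (P v).elim (G.pr v) Fin.val
  exists_succ := fun v => by
    by_cases h : P v = none
    · obtain ⟨w, hw⟩ := G.exists_succ v
      exact ⟨w, by simp [h, hw]⟩
    · exact ⟨v, by simp [h]⟩

/-- A justification for `G`: a subgraph `D` together with a hypothesis `H`. -/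
structure Justification (G : ParityGame V) where
  D : V → V → Prop
  H : V → Fin 2

variable {G : ParityGame V}

namespace Justification

/-- `v` is justified in `J`: it has an outgoing edge in `D`. -/
def Justified (J : Justification G) (v : V) : Prop := ∃ w, J.D v w

/-- The set of outgoing edges of `v` in `D`. -/
def outEdges (J : Justification G) (v : V) : Set (V × V) :=
  {p | p.1 = v ∧ J.D v p.2}

/-- `J` is weakly winning: the outgoing edges of every justified node `v`
form a direct justification winning `v` for `H v` under `H`. -/
def WeaklyWinning (J : Justification G) : Prop :=
  ∀ v, J.Justified v → G.WinsDJ J.H v (J.H v) (J.outEdges v)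

/-- `J` is winning: weakly winning, and every infinite path in `D` is a play
of `G` won by the hypothetical winner of its nodes. -/
def Winning (J : Justification G) : Prop :=
  J.WeaklyWinning ∧
    ∀ π : ℕ → V, IsInfPath J.D π → G.InfWonBy π (J.H (π 0))

/-- The parameter function `P_J`: the restriction of `H` to the unjustified
nodes of `J`. -/
def param (J : Justification G) (v : V) : Option (Fin 2) :=
  if J.Justified v then none else some (J.H v)

/-- The strategy `σ_{J,α}`: the set of edges `(v, w) ∈ D` with
`O v = H v = α`. -/
def strat (J : Justification G) (α : Fin 2) : V → V → Prop :=
  fun v w => J.D v w ∧ G.owner v = α ∧ J.H v = α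

/-- `Par_J v`: the parameters (unjustified nodes) reachable from `v` in `D`. -/
def Par (J : Justification G) (v : V) : Set V :=
  {w | Reaches J.D v w ∧ ¬ J.Justified w}

/-- The justification level of `v`: the minimal priority of a parameter
reachable from `v`, and `⊤` (`+∞`) if there is none. -/
def jl (J : Justification G) (v : V) : ℕ∞ :=
  sInf ((fun w => (G.pr w : ℕ∞)) '' J.Par v)

/-- The justification level of a direct justification: the minimum of the
justification levels of the targets of its edges. -/
def jlDJ (J : Justification G) (dj : Set (V × V)) : ℕ∞ :=
  sInf ((fun p : V × V => J.jl p.2) '' dj)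

/-- `J` is safe: winning, unjustified nodes have their default winner as
hypothesis, and the justification level of every node is at least its
priority. -/
def Safe (J : Justification G) : Prop :=
  J.Winning ∧ (∀ v, ¬ J.Justified v → J.H v = G.Hd v) ∧
    ∀ v, (G.pr v : ℕ∞) ≤ J.jl v

/-- `J[v : dj, α]`: replace the outgoing `D`-edges of `v` by `dj` and set
`H v := α`. -/
def update (J : Justification G) (v : V) (dj : Set (V × V)) (α : Fin 2) :
    Justification G where
  D := fun x y => if x = v then (x, y) ∈ dj else J.D x y
  H := fun x => if x = v then α else J.H x

/-- `J[v : ∅, Hf v | v ∈ S]`: remove the direct justification of every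
`v ∈ S` and set `H v := Hf v`. -/
def resetAll (J : Justification G) (S : Set V) (Hf : V → Fin 2) :
    Justification G where
  D := fun x y => if x ∈ S then False else J.D x y
  H := fun x => if x ∈ S then Hf x else J.H x

/-- `s_i(J)`: the number of justified nodes of justification level `i`. -/
def size (J : Justification G) (i : ℕ∞) : ℕ :=
  {v | J.Justified v ∧ J.jl v = i}.ncard

end Justification

/-- The preconditions of the operation `Justify(J, v, dj)`. -/
def Executable (G : ParityGame V) (J : Justification G) (v : V)
    (dj : Set (V × V)) : Prop :=
  J.Safe ∧ (∃ α, G.WinsDJ J.H v α dj) ∧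
    (if J.Justified v then J.jl v < J.jlDJ dj else J.jl v ≤ J.jlDJ dj)

/-- The operation `Justify(J, v, dj)`, where `α` is the player winning `v`
by `dj`: if `H v = α` this is `J[v : dj, α]`; otherwise all nodes reaching
`v` in `D` are reset to their default winner and then `v` gets `dj`. -/
def justify (G : ParityGame V) (J : Justification G) (v : V)
    (dj : Set (V × V)) (α : Fin 2) : Justification G :=
  if J.H v = α then J.update v dj α
  else (J.resetAll {w | Reaches J.D w v} G.Hd).update v dj α

/-- The empty justification `(V, ∅, H_d)`. -/
def Justification.empty (G : ParityGame V) : Justification G :=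
  ⟨fun _ _ => False, G.Hd⟩

/-- One `Justify` step: some node `v` is justifiable with some `dj`
(won by some player `α`) and `J'` is the result of the operation. -/
def JustifyStep (G : ParityGame V) (J J' : Justification G) : Prop :=
  ∃ (v : V) (dj : Set (V × V)) (α : Fin 2),
    J.Safe ∧ G.WinsDJ J.H v α dj ∧
    (if J.Justified v then J.jl v < J.jlDJ dj else J.jl v ≤ J.jlDJ dj) ∧
    J' = justify G J v dj α

/-!
A `Justify` step preserves safety. For winning, take an infinite `D`-path of the new
justification. If it meets `v` only finitely often, a tail of it is a path of the old
justification outside the reset nodes, and the hypothesis is unchanged there. If it meets `v`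
infinitely often, every node of the path reaches `v`. After a reset this is impossible, as
no edge enters `v`. Without a reset, if `v` was justified, the target of `dj` would reach `v`
in the old graph, contradicting `jl v < jl dj`. If `v` was unjustified, it is a parameter of
every node of the path, so safety bounds all priorities on the path by `Pr v`, and
`H v = H_d v`.

For termination, weigh each justified node `x` by `(|V| + 1) ^ jl x`, levels truncated to
naturals. A step lowers no level outside `v` and the reset nodes. Those all had level at most
`jl v`, and together they weigh less than the new `v`, whose level is at least `jl dj`; this
exceeds `jl v` as soon as one of them was justified (by the level condition if `v` was, by a
parity argument after a reset). So the bounded total weight strictly increases.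

When no step applies, every node is justified, since the unjustified node of least priority
is always justifiable. A play from `v` consistent with `σ_{J, H v}` then stays inside `D`,
so `H v` wins it.
-/

end ParityGame

theorem Set.infinite_setOf_add_iff (p : ℕ → Prop) (N : ℕ) :
    {i | p (N + i)}.Infinite ↔ {i | p i}.Infinite := by
  simp only [← Nat.frequently_atTop_iff_infinite, add_comm N]
  rw [← Filter.frequently_map (m := fun i => i + N), Filter.map_add_atTop_eq_nat]

theorem Finset.sum_lt_pow_of_mul_le {ι : Type*} {s : Finset ι} {f : ι → ℕ} {B r : ℕ}
    (hs : s.card < B) (hf : ∀ i ∈ s, f i * B ≤ B ^ r) : ∑ i ∈ s, f i < B ^ r := by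
  have h : (∑ i ∈ s, f i) * B ≤ s.card * B ^ r := by
    rw [Finset.sum_mul]
    simpa using Finset.sum_le_card_nsmul s _ _ hf
  refine Nat.lt_of_mul_lt_mul_right (a := B) (h.trans_lt ?_)
  rw [mul_comm]
  exact Nat.mul_lt_mul_of_pos_left hs (Nat.pow_pos (by omega))

namespace ParityGame

variable {V : Type*} {G : ParityGame V}

/-- Truncating at `M + 1` keeps the levels `≤ M` apart from each other and from `⊤`. -/
def levelIndex (M : ℕ) (x : ℕ∞) : ℕ :=
  (min x ↑(M + 1)).toNat

theorem levelIndex_mono (M : ℕ) : Monotone (levelIndex M) := fun _ _ h =>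
  ENat.toNat_le_toNat (min_le_min_right _ h)
    (ne_top_of_le_ne_top (ENat.natCast_ne_top _) (min_le_right _ _))

theorem levelIndex_lt {M : ℕ} {x y : ℕ∞} (hxy : x < y) (hx : x ≤ M) :
    levelIndex M x < levelIndex M y := by
  have hM : (M : ℕ∞) < ↑(M + 1) := by exact_mod_cast Nat.lt_succ_self M
  have hlt : x < min y ↑(M + 1) := lt_min hxy (hx.trans_lt hM)
  have hz : min y ↑(M + 1) ≠ ⊤ :=
    ne_top_of_le_ne_top (ENat.natCast_ne_top _) (min_le_right _ _)
  rw [levelIndex, levelIndex, min_eq_left (hx.trans hM.le)]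
  generalize min y _ = z at hz hlt
  lift z to ℕ using hz
  lift x to ℕ using (hlt.trans (ENat.natCast_lt_top z)).ne
  simpa using hlt

theorem levelIndex_le (M : ℕ) (x : ℕ∞) : levelIndex M x ≤ M + 1 :=
  ENat.toNat_le_of_le_natCast (min_le_right _ _)

theorem IsInfPath.reaches {R : V → V → Prop} {π : ℕ → V} (h : IsInfPath R π) {i j : ℕ}
    (hij : i ≤ j) : Reaches R (π i) (π j) := by
  induction j, hij using Nat.le_induction with
  | base => exact .refl
  | succ j _ ih => exact ih.tail (h j)

theorem InfWonBy.of_add {π : ℕ → V} {N : ℕ} {α : Fin 2}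
    (h : G.InfWonBy (fun i => π (N + i)) α) : G.InfWonBy π α := by
  obtain ⟨p, hp, hmax, hα⟩ := h
  refine ⟨p, (Set.infinite_setOf_add_iff _ N).1 hp, fun q hq => ?_, hα⟩
  exact hmax q ((Set.infinite_setOf_add_iff (fun i => G.pr (π i) = q) N).2 hq)

theorem infWonBy_of_forall_pr_le {π : ℕ → V} {u : V} (hle : ∀ i, G.pr (π i) ≤ G.pr u)
    (hu : {i | π i = u}.Infinite) : G.InfWonBy π (G.Hd u) := by
  refine ⟨G.pr u, hu.mono fun i (hi : π i = u) => congrArg G.pr hi, fun q hq => ?_, rfl⟩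
  obtain ⟨i, rfl⟩ := hq.nonempty
  exact hle i

theorem IsDJ.fst_eq {v : V} {α : Fin 2} {dj : Set (V × V)} (h : G.IsDJ v α dj) {p : V × V}
    (hp : p ∈ dj) : p.1 = v := by
  by_cases ho : G.owner v = α
  · obtain ⟨w, -, rfl⟩ := h.1 ho
    rw [hp]
  · rw [h.2 ho] at hp
    exact hp.1

theorem IsDJ.nonempty {v : V} {α : Fin 2} {dj : Set (V × V)} (h : G.IsDJ v α dj) :
    dj.Nonempty := by
  by_cases ho : G.owner v = α
  · obtain ⟨w, -, rfl⟩ := h.1 ho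
    exact Set.singleton_nonempty _
  · obtain ⟨w, hw⟩ := G.exists_succ v
    exact ⟨(v, w), by rw [h.2 ho]; exact ⟨rfl, hw⟩⟩

theorem exists_winsDJ (H : V → Fin 2) (v : V) : ∃ α dj, G.WinsDJ H v α dj := by
  by_cases hex : ∃ w, G.E v w ∧ H w = G.owner v
  · obtain ⟨w, hEw, hHw⟩ := hex
    exact ⟨G.owner v, {(v, w)}, ⟨fun _ => ⟨w, hEw, rfl⟩, fun h => (h rfl).elim⟩,
      by simp [hHw]⟩
  · refine ⟨G.owner v + 1, {p | p.1 = v ∧ G.E v p.2}, ⟨fun h => ?_, fun _ => rfl⟩, ?_⟩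
    · omega
    · rintro p ⟨-, hp⟩
      by_contra hne
      exact hex ⟨p.2, hp, by omega⟩

namespace Justification

variable {J : Justification G} {v : V} {dj : Set (V × V)} {α : Fin 2}

theorem H_eq_of_D (hJ : J.WeaklyWinning) {u w : V} (h : J.D u w) : J.H w = J.H u :=
  (hJ u ⟨w, h⟩).2 (u, w) ⟨rfl, h⟩

theorem H_eq_of_reaches (hJ : J.WeaklyWinning) {u w : V} (h : Reaches J.D u w) :
    J.H w = J.H u := by
  induction h with
  | refl => rfl
  | tail _ hstep ih => rw [H_eq_of_D hJ hstep, ih]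

theorem jl_le_pr {u w : V} (h : w ∈ J.Par u) : J.jl u ≤ G.pr w :=
  sInf_le ⟨w, h, rfl⟩

theorem le_jl {u : V} {c : ℕ∞} (h : ∀ w ∈ J.Par u, c ≤ G.pr w) : c ≤ J.jl u :=
  le_sInf <| by
    rintro _ ⟨w, hw, rfl⟩
    exact h w hw

theorem jl_mono {u w : V} (h : Reaches J.D u w) : J.jl u ≤ J.jl w :=
  le_jl fun _ hz => jl_le_pr ⟨h.trans hz.1, hz.2⟩

theorem Par_of_not_justified {u : V} (h : ¬ J.Justified u) : J.Par u = {u} := by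
  ext w
  refine ⟨fun ⟨hr, _⟩ => ?_, by rintro rfl; exact ⟨.refl, h⟩⟩
  rcases Relation.ReflTransGen.cases_head hr with rfl | ⟨c, hc, -⟩
  · rfl
  · exact (h ⟨c, hc⟩).elim

theorem jl_of_not_justified {u : V} (h : ¬ J.Justified u) : J.jl u = G.pr u := by
  simp [jl, Par_of_not_justified h]

theorem exists_mem_Par_pr_eq_jl {u : V} (h : J.jl u ≠ ⊤) :
    ∃ w ∈ J.Par u, (G.pr w : ℕ∞) = J.jl u :=
  csInf_mem (s := (fun w => (G.pr w : ℕ∞)) '' J.Par u) <| by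
    by_contra hemp
    rw [Set.not_nonempty_iff_eq_empty] at hemp
    exact h (by rw [jl, hemp, sInf_empty])

theorem ofNat_eq_H_of_jl_eq (hJ : J.WeaklyWinning) (hd : ∀ x, ¬ J.Justified x → J.H x = G.Hd x)
    {u : V} {m : ℕ} (h : J.jl u = m) : Fin.ofNat 2 m = J.H u := by
  obtain ⟨w, ⟨hr, hw⟩, hwm⟩ :=
    exists_mem_Par_pr_eq_jl (h ▸ ENat.natCast_ne_top m : J.jl u ≠ ⊤)
  rw [h, Nat.cast_inj] at hwm
  rw [← H_eq_of_reaches hJ hr, hd w hw, ← hwm, Hd]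

theorem jlDJ_le {p : V × V} (h : p ∈ dj) : J.jlDJ dj ≤ J.jl p.2 :=
  sInf_le ⟨p, h, rfl⟩

theorem le_jlDJ {c : ℕ∞} (h : ∀ p ∈ dj, c ≤ J.jl p.2) : c ≤ J.jlDJ dj :=
  le_sInf <| by
    rintro _ ⟨p, hp, rfl⟩
    exact h p hp

theorem exists_mem_jl_eq_jlDJ (h : dj.Nonempty) :
    ∃ p ∈ dj, J.jl p.2 = J.jlDJ dj :=
  csInf_mem (h.image _)

def resetSet (J : Justification G) (v : V) (α : Fin 2) : Set V :=
  {w | J.H v ≠ α ∧ Reaches J.D w v}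

def LevelCondition (J : Justification G) (v : V) (dj : Set (V × V)) : Prop :=
  if J.Justified v then J.jl v < J.jlDJ dj else J.jl v ≤ J.jlDJ dj

theorem LevelCondition.le (h : J.LevelCondition v dj) : J.jl v ≤ J.jlDJ dj := by
  unfold LevelCondition at h
  split_ifs at h
  exacts [h.le, h]

theorem mem_resetSet_of_D {x y : V} (hD : J.D x y) (hy : y ∈ J.resetSet v α) :
    x ∈ J.resetSet v α :=
  ⟨hy.1, .head hD hy.2⟩

theorem justify_D {x y : V} :
    (justify G J v dj α).D x y ↔
      x = v ∧ (x, y) ∈ dj ∨ x ≠ v ∧ x ∉ J.resetSet v α ∧ J.D x y := by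
  by_cases hv : J.H v = α <;> by_cases hx : x = v <;>
    simp [justify, update, resetAll, resetSet, hv, hx]

theorem justify_H {x : V} :
    (justify G J v dj α).H x =
      if x = v then α else if x ∈ J.resetSet v α then G.Hd x else J.H x := by
  by_cases hv : J.H v = α <;> simp [justify, update, resetAll, resetSet, hv]

theorem justify_H_self : (justify G J v dj α).H v = α := by
  simp [justify_H]

theorem justify_H_of_not_mem {x : V} (hx : x ∉ J.resetSet v α) :
    (justify G J v dj α).H x = J.H x := by
  rw [justify_H]
  split_ifs with hxv
  · subst hxv
    by_contra hne
    exact hx ⟨Ne.symm hne, .refl⟩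
  · rfl

theorem snd_not_mem_resetSet (hJ : J.WeaklyWinning) (hwin : G.WinsDJ J.H v α dj)
    {p : V × V} (hp : p ∈ dj) : p.2 ∉ J.resetSet v α := fun ⟨hv, hr⟩ =>
  hv (H_eq_of_reaches hJ hr ▸ hwin.2 p hp)

theorem justified_justify_iff (hdj : G.IsDJ v α dj) {x : V} :
    (justify G J v dj α).Justified x ↔ x = v ∨ x ∉ J.resetSet v α ∧ J.Justified x := by
  constructor
  · rintro ⟨y, hy⟩
    rcases justify_D.1 hy with ⟨rfl, -⟩ | ⟨-, hx, hD⟩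
    exacts [.inl rfl, .inr ⟨hx, y, hD⟩]
  · intro h
    by_cases hxv : x = v
    · obtain ⟨p, hp⟩ := hdj.nonempty
      refine ⟨p.2, justify_D.2 (.inl ⟨hxv, ?_⟩)⟩
      rwa [hxv, ← hdj.fst_eq hp]
    · obtain ⟨hx, y, hy⟩ := h.resolve_left hxv
      exact ⟨y, justify_D.2 (.inr ⟨hxv, hx, hy⟩)⟩

theorem outEdges_justify_self (hdj : G.IsDJ v α dj) : (justify G J v dj α).outEdges v = dj := by
  ext ⟨a, b⟩
  constructor
  · rintro ⟨rfl, hD⟩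
    rcases justify_D.1 hD with ⟨-, h⟩ | ⟨hne, -⟩
    exacts [h, (hne rfl).elim]
  · intro hp
    obtain rfl : a = v := hdj.fst_eq hp
    exact ⟨rfl, justify_D.2 (.inl ⟨rfl, hp⟩)⟩

theorem outEdges_justify_of_ne {x : V} (hxv : x ≠ v) (hx : x ∉ J.resetSet v α) :
    (justify G J v dj α).outEdges x = J.outEdges x := by
  ext p
  exact and_congr_right' <| justify_D.trans <| by simp [hxv, hx]

theorem weaklyWinning_justify (hJ : J.WeaklyWinning) (hwin : G.WinsDJ J.H v α dj) :
    (justify G J v dj α).WeaklyWinning := by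
  intro x hx
  by_cases hxv : x = v
  · subst hxv
    rw [outEdges_justify_self hwin.1, justify_H_self]
    exact ⟨hwin.1, fun p hp => by
      rw [justify_H_of_not_mem (snd_not_mem_resetSet hJ hwin hp), hwin.2 p hp]⟩
  · obtain ⟨hxR, hxJ⟩ := ((justified_justify_iff hwin.1).1 hx).resolve_left hxv
    rw [outEdges_justify_of_ne hxv hxR, justify_H_of_not_mem hxR]
    refine ⟨(hJ x hxJ).1, fun p hp => ?_⟩
    rw [justify_H_of_not_mem fun hpR => hxR (mem_resetSet_of_D hp.2 hpR)]
    exact (hJ x hxJ).2 p hp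

theorem justify_H_of_not_justified (hd : ∀ x, ¬ J.Justified x → J.H x = G.Hd x)
    (hdj : G.IsDJ v α dj) {x : V} (hx : ¬ (justify G J v dj α).Justified x) :
    (justify G J v dj α).H x = G.Hd x := by
  rw [justified_justify_iff hdj, not_or, not_and_or, not_not] at hx
  rw [justify_H, if_neg hx.1]
  split_ifs with hxR
  · rfl
  · exact hd x (hx.2.resolve_left hxR)

theorem mem_Par_or_of_mem_Par_justify (hJ : J.WeaklyWinning) (hwin : G.WinsDJ J.H v α dj)
    {x w : V} (hx : x ∉ J.resetSet v α) (hw : w ∈ (justify G J v dj α).Par x) :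
    w ∈ J.Par x ∨ Reaches J.D x v ∧ J.jlDJ dj ≤ G.pr w := by
  obtain ⟨hr, hunj⟩ := hw
  induction hr using Relation.ReflTransGen.head_induction_on with
  | refl =>
    exact .inl ⟨.refl, fun hj => hunj ((justified_justify_iff hwin.1).2 (.inr ⟨hx, hj⟩))⟩
  | head hxc _ ih =>
    rcases justify_D.1 hxc with ⟨rfl, hdj⟩ | ⟨-, -, hD⟩
    · refine .inr ⟨.refl, ?_⟩
      rcases ih (snd_not_mem_resetSet hJ hwin hdj) with hpar | ⟨-, hle⟩
      exacts [(jlDJ_le hdj).trans (jl_le_pr hpar), hle]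
    · rcases ih fun hc => hx (mem_resetSet_of_D hD hc) with ⟨hr, hw⟩ | ⟨hr, hle⟩
      exacts [.inl ⟨.head hD hr, hw⟩, .inr ⟨.head hD hr, hle⟩]

theorem jlDJ_le_jl_justify (hJ : J.WeaklyWinning) (hwin : G.WinsDJ J.H v α dj) :
    J.jlDJ dj ≤ (justify G J v dj α).jl v := by
  refine le_jl fun w ⟨hr, hunj⟩ => ?_
  rcases Relation.ReflTransGen.cases_head hr with rfl | ⟨c, hvc, hr⟩
  · exact (hunj ((justified_justify_iff hwin.1).2 (.inl rfl))).elim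
  rcases justify_D.1 hvc with ⟨-, hdj⟩ | ⟨hne, -⟩
  · rcases mem_Par_or_of_mem_Par_justify hJ hwin (snd_not_mem_resetSet hJ hwin hdj)
      ⟨hr, hunj⟩ with hpar | ⟨-, hle⟩
    exacts [(jlDJ_le hdj).trans (jl_le_pr hpar), hle]
  · exact (hne rfl).elim

theorem jl_le_jl_justify (hJ : J.WeaklyWinning) (hwin : G.WinsDJ J.H v α dj)
    (hle : J.jl v ≤ J.jlDJ dj) {x : V} (hx : x ∉ J.resetSet v α) :
    J.jl x ≤ (justify G J v dj α).jl x := by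
  refine le_jl fun w hw => ?_
  rcases mem_Par_or_of_mem_Par_justify hJ hwin hx hw with hpar | ⟨hr, hw⟩
  exacts [jl_le_pr hpar, (jl_mono hr).trans (hle.trans hw)]

theorem pr_le_jl_justify (hS : J.Safe) (hwin : G.WinsDJ J.H v α dj)
    (hle : J.jl v ≤ J.jlDJ dj) (x : V) : (G.pr x : ℕ∞) ≤ (justify G J v dj α).jl x := by
  by_cases hx : (justify G J v dj α).Justified x
  · rcases (justified_justify_iff hwin.1).1 hx with rfl | ⟨hxR, -⟩
    · exact (hS.2.2 x).trans (hle.trans (jlDJ_le_jl_justify hS.1.1 hwin))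
    · exact (hS.2.2 x).trans (jl_le_jl_justify hS.1.1 hwin hle hxR)
  · exact (jl_of_not_justified hx).ge

theorem reaches_of_reaches_justify (hv : J.H v = α) {x : V}
    (h : Reaches (justify G J v dj α).D x v) : Reaches J.D x v := by
  induction h using Relation.ReflTransGen.head_induction_on with
  | refl => exact .refl
  | head hxc _ ih =>
    rcases justify_D.1 hxc with ⟨rfl, -⟩ | ⟨-, -, hD⟩
    exacts [.refl, .head hD ih]

theorem not_justify_D_self (hJ : J.WeaklyWinning) (hwin : G.WinsDJ J.H v α dj)
    (hv : J.H v ≠ α) (x : V) : ¬ (justify G J v dj α).D x v := by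
  intro h
  rcases justify_D.1 h with ⟨rfl, hdj⟩ | ⟨-, hx, hD⟩
  · exact snd_not_mem_resetSet hJ hwin hdj ⟨hv, .refl⟩
  · exact hx ⟨hv, .single hD⟩

theorem infWonBy_justify_of_forall_ne (hJ : J.Winning) (hwin : G.WinsDJ J.H v α dj)
    {π : ℕ → V} (hπ : IsInfPath (justify G J v dj α).D π) {N : ℕ}
    (hN : ∀ i, π (N + i) ≠ v) :
    G.InfWonBy π ((justify G J v dj α).H (π 0)) := by
  have hstep (i : ℕ) : π (N + i) ∉ J.resetSet v α ∧ J.D (π (N + i)) (π (N + i + 1)) := by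
    rcases justify_D.1 (hπ (N + i)) with ⟨h, -⟩ | ⟨-, hR, hD⟩
    exacts [(hN i h).elim, ⟨hR, hD⟩]
  rw [← H_eq_of_reaches (weaklyWinning_justify hJ.1 hwin) (hπ.reaches (Nat.zero_le N)),
    justify_H_of_not_mem (x := π N) (hstep 0).1]
  exact .of_add (hJ.2 _ fun i => (hstep i).2)

theorem infWonBy_justify_of_infinite_visits (hS : J.Safe) (hwin : G.WinsDJ J.H v α dj)
    (hlvl : J.LevelCondition v dj) {π : ℕ → V}
    (hπ : IsInfPath (justify G J v dj α).D π) (hinf : {i | π i = v}.Infinite) :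
    G.InfWonBy π ((justify G J v dj α).H (π 0)) := by
  obtain ⟨k, hk : π k = v, hk0⟩ := hinf.exists_gt 0
  have hreach (i : ℕ) : Reaches (justify G J v dj α).D (π i) v := by
    obtain ⟨j, hj : π j = v, hij⟩ := hinf.exists_gt i
    exact hj ▸ hπ.reaches hij.le
  by_cases hv : J.H v = α
  swap
  · refine (not_justify_D_self hS.1.1 hwin hv (π (k - 1)) ?_).elim
    simpa [Nat.sub_add_cancel hk0, hk] using hπ (k - 1)
  have hreach' (i : ℕ) : Reaches J.D (π i) v := reaches_of_reaches_justify hv (hreach i)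
  by_cases hjust : J.Justified v
  · rw [LevelCondition, if_pos hjust] at hlvl
    have hdj : (v, π (k + 1)) ∈ dj := by
      rcases justify_D.1 (hk ▸ hπ k) with ⟨-, hdj⟩ | ⟨hne, -⟩
      exacts [hdj, (hne rfl).elim]
    exact absurd ((jlDJ_le hdj).trans (jl_mono (hreach' (k + 1)))) hlvl.not_ge
  · have hpr (i : ℕ) : G.pr (π i) ≤ G.pr v := by
      exact_mod_cast (hS.2.2 (π i)).trans (jl_le_pr ⟨hreach' i, hjust⟩)
    rw [← H_eq_of_reaches (weaklyWinning_justify hS.1.1 hwin) (hreach 0), justify_H_self,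
      ← hv, hS.2.1 v hjust]
    exact infWonBy_of_forall_pr_le hpr hinf

theorem winning_justify (hS : J.Safe) (hwin : G.WinsDJ J.H v α dj)
    (hlvl : J.LevelCondition v dj) :
    (justify G J v dj α).Winning := by
  refine ⟨weaklyWinning_justify hS.1.1 hwin, fun π hπ => ?_⟩
  rcases Set.finite_or_infinite {i | π i = v} with hfin | hinf
  · obtain ⟨N, hN⟩ := hfin.bddAbove
    exact infWonBy_justify_of_forall_ne hS.1 hwin hπ (N := N + 1) fun i hi => by
      have := hN hi
      omega
  · exact infWonBy_justify_of_infinite_visits hS hwin hlvl hπ hinf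

theorem safe_justify (hS : J.Safe) (hwin : G.WinsDJ J.H v α dj)
    (hlvl : J.LevelCondition v dj) :
    (justify G J v dj α).Safe :=
  ⟨winning_justify hS hwin hlvl, fun _ => justify_H_of_not_justified hS.2.1 hwin.1,
    pr_le_jl_justify hS hwin (hlvl.le)⟩

theorem jl_lt_jlDJ (hS : J.Safe) (hwin : G.WinsDJ J.H v α dj)
    (hlvl : J.LevelCondition v dj)
    (h : J.Justified v ∨ J.H v ≠ α) : J.jl v < J.jlDJ dj := by
  by_cases hjust : J.Justified v
  · rwa [LevelCondition, if_pos hjust] at hlvl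
  rw [LevelCondition, if_neg hjust] at hlvl
  refine hlvl.lt_of_ne fun heq => h.resolve_left hjust ?_
  obtain ⟨p, hp, hpv⟩ := exists_mem_jl_eq_jlDJ (J := J) hwin.1.nonempty
  rw [← heq, jl_of_not_justified hjust] at hpv
  rw [hS.2.1 v hjust, ← hwin.2 p hp, ← ofNat_eq_H_of_jl_eq hS.1.1 hS.2.1 hpv, Hd]

theorem safe_empty : (Justification.empty G).Safe :=
  ⟨⟨fun _ ⟨_, h⟩ => h.elim, fun _ hπ => (hπ 0).elim⟩, fun _ _ => rfl,
    fun _ => (jl_of_not_justified fun ⟨_, h⟩ => h).ge⟩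

theorem exists_justifyStep [Finite V] (hS : J.Safe) {u : V} (hu : ¬ J.Justified u) :
    ∃ J', JustifyStep G J J' := by
  obtain ⟨v, hv, hmin⟩ :=
    Set.exists_min_image {x | ¬ J.Justified x} G.pr (Set.toFinite _) ⟨u, hu⟩
  obtain ⟨α, dj, hwin⟩ := exists_winsDJ J.H v
  refine ⟨_, v, dj, α, hS, hwin, ?_, rfl⟩
  rw [if_neg hv, jl_of_not_justified hv]
  exact le_jlDJ fun _ _ => le_jl fun w hw => by exact_mod_cast hmin w hw.2

theorem D_of_consistent (hJ : J.WeaklyWinning) {x y : V} (hx : J.Justified x) (hxy : G.E x y)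
    (hσ : ∀ u, J.strat (J.H x) x u → y = u) : J.D x y := by
  obtain ⟨hdj, -⟩ := hJ x hx
  by_cases ho : G.owner x = J.H x
  · obtain ⟨w, -, hw⟩ := hdj.1 ho
    have hxw : J.D x w := (hw.symm ▸ rfl : (x, w) ∈ J.outEdges x).2
    rwa [hσ w ⟨hxw, ho, rfl⟩]
  · exact ((hdj.2 ho).symm ▸ ⟨rfl, hxy⟩ : (x, y) ∈ J.outEdges x).2

theorem infWonBy_of_consistent (hJ : J.Winning) (hall : ∀ x, J.Justified x) {π : ℕ → V}
    (hπ : IsInfPath G.E π) (hcons : Consistent (J.strat (J.H (π 0))) π) :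
    G.InfWonBy π (J.H (π 0)) := by
  have hH (i : ℕ) : J.H (π i) = J.H (π 0) ∧ J.D (π i) (π (i + 1)) := by
    induction i with
    | zero => exact ⟨rfl, D_of_consistent hJ.1 (hall _) (hπ 0) (hcons 0)⟩
    | succ i ih =>
      have hHi : J.H (π (i + 1)) = J.H (π 0) := (H_eq_of_D hJ.1 ih.2).trans ih.1
      exact ⟨hHi, D_of_consistent hJ.1 (hall _) (hπ _) (hHi ▸ hcons (i + 1))⟩
  exact hJ.2 π fun i => (hH i).2

section Termination

variable [Fintype V]

theorem jl_le_sup_pr {x : V} (h : J.jl x ≠ ⊤) : J.jl x ≤ Finset.univ.sup G.pr := by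
  obtain ⟨w, -, hw⟩ := exists_mem_Par_pr_eq_jl h
  rw [← hw]
  exact_mod_cast Finset.le_sup (Finset.mem_univ w)

def weight (J : Justification G) (x : V) : ℕ :=
  if J.Justified x then (Fintype.card V + 1) ^ levelIndex (Finset.univ.sup G.pr) (J.jl x) else 0

def potential (J : Justification G) : ℕ :=
  ∑ x, J.weight x

theorem potential_le (J : Justification G) :
    J.potential ≤ Fintype.card V * (Fintype.card V + 1) ^ (Finset.univ.sup G.pr + 1) := by
  refine (Finset.sum_le_card_nsmul _ _ _ fun x _ => ?_).trans_eq
    (by rw [Finset.card_univ, smul_eq_mul])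
  unfold weight
  split_ifs
  · exact Nat.pow_le_pow_right (Nat.succ_pos _) (levelIndex_le _ _)
  · exact Nat.zero_le _

theorem weight_le_weight_justify (hJ : J.WeaklyWinning) (hwin : G.WinsDJ J.H v α dj)
    (hle : J.jl v ≤ J.jlDJ dj) {x : V} (hx : x ∉ J.resetSet v α) :
    J.weight x ≤ (justify G J v dj α).weight x := by
  by_cases hjust : J.Justified x
  · rw [weight, weight, if_pos hjust,
      if_pos ((justified_justify_iff hwin.1).2 (.inr ⟨hx, hjust⟩))]
    exact Nat.pow_le_pow_right (Nat.succ_pos _)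
      (levelIndex_mono _ (jl_le_jl_justify hJ hwin hle hx))
  · simp [weight, hjust]

theorem weight_mul_le_justify (hS : J.Safe) (hwin : G.WinsDJ J.H v α dj)
    (hlvl : J.LevelCondition v dj) {x : V}
    (hx : x = v ∨ x ∈ J.resetSet v α) :
    J.weight x * (Fintype.card V + 1) ≤
      (Fintype.card V + 1) ^ levelIndex (Finset.univ.sup G.pr) ((justify G J v dj α).jl v) := by
  by_cases hjust : J.Justified x
  · have hlt : J.jl x < (justify G J v dj α).jl v := by
      rcases hx with rfl | ⟨hv, hr⟩
      · exact (jl_lt_jlDJ hS hwin hlvl (.inl hjust)).trans_le (jlDJ_le_jl_justify hS.1.1 hwin)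
      · exact (jl_mono hr).trans_lt <|
          (jl_lt_jlDJ hS hwin hlvl (.inr hv)).trans_le (jlDJ_le_jl_justify hS.1.1 hwin)
    rw [weight, if_pos hjust, ← pow_succ]
    exact Nat.pow_le_pow_right (Nat.succ_pos _) (levelIndex_lt hlt (jl_le_sup_pr hlt.ne_top))
  · simp [weight, hjust]

theorem potential_lt_justify (hS : J.Safe) (hwin : G.WinsDJ J.H v α dj)
    (hlvl : J.LevelCondition v dj) :
    J.potential < (justify G J v dj α).potential := by
  set K := Finset.univ.filter fun x => x = v ∨ x ∈ J.resetSet v α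
  have hvK : v ∈ K := by simp [K]
  have hK : ∑ x ∈ K, J.weight x < ∑ x ∈ K, (justify G J v dj α).weight x := by
    refine (Finset.sum_lt_pow_of_mul_le (Nat.lt_succ_of_le (Finset.card_le_univ K))
      fun x hx => weight_mul_le_justify hS hwin hlvl (Finset.mem_filter.1 hx).2).trans_le ?_
    refine le_of_eq_of_le ?_ (Finset.single_le_sum (fun _ _ => Nat.zero_le _) hvK)
    rw [weight, if_pos ((justified_justify_iff hwin.1).2 (.inl rfl))]
  have hKc : ∑ x ∈ Kᶜ, J.weight x ≤ ∑ x ∈ Kᶜ, (justify G J v dj α).weight x :=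
    Finset.sum_le_sum fun x hx => weight_le_weight_justify hS.1.1 hwin (hlvl.le)
      fun hR => Finset.mem_compl.1 hx (by simp [K, hR])
  rw [potential, potential, ← Finset.sum_add_sum_compl K, ← Finset.sum_add_sum_compl K]
  exact add_lt_add_of_lt_of_le hK hKc

end Termination

end Justification

/-- starting from the empty safe justification `(V, ∅, H_d)`,
there is no infinite sequence of executable `Justify` steps, and any finite
sequence of such steps that cannot be prolonged ends in a safe justification
`J^k` in which every node is justified; moreover its hypothesis `H^k` is the
winning function of the parity game: for every node `v`, every play of `G`
from `v` consistent with `σ_{J^k, H^k v}` is won by `H^k v` (so the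
`σ_{J^k,α}` are winning strategies on the respective winning sets). -/
theorem stmt_16 {V : Type*} [Fintype V] (G : ParityGame V) :
    (¬ ∃ f : ℕ → Justification G, f 0 = Justification.empty G ∧
        ∀ i, JustifyStep G (f i) (f (i + 1))) ∧
    (∀ (k : ℕ) (f : ℕ → Justification G), f 0 = Justification.empty G →
      (∀ i < k, JustifyStep G (f i) (f (i + 1))) →
      (∀ J', ¬ JustifyStep G (f k) J') →
      (f k).Safe ∧ (∀ v, (f k).Justified v) ∧
      ∀ (v : V) (π : ℕ → V), π 0 = v → IsInfPath G.E π →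
        Consistent ((f k).strat ((f k).H v)) π →
        G.InfWonBy π ((f k).H v)) := by
  refine ⟨fun ⟨f, _, hstep⟩ => ?_, fun k f h0 hsteps hmax => ?_⟩
  · have hmono : StrictMono fun i => (f i).potential := strictMono_nat_of_lt_succ fun i => by
      obtain ⟨v, dj, α, hS, hwin, hlvl, heq⟩ := hstep i
      exact heq ▸ Justification.potential_lt_justify hS hwin hlvl
    exact (hmono.id_le _).not_gt (Nat.lt_succ_of_le (Justification.potential_le (f _)))
  have hS : (f k).Safe := by
    cases k with
    | zero => exact h0 ▸ Justification.safe_empty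
    | succ k =>
      obtain ⟨v, dj, α, hS, hwin, hlvl, heq⟩ := hsteps k k.lt_succ_self
      exact heq ▸ Justification.safe_justify hS hwin hlvl
  have hall (x : V) : (f k).Justified x := by
    by_contra hx
    obtain ⟨J', hJ'⟩ := Justification.exists_justifyStep hS hx
    exact hmax J' hJ'
  exact ⟨hS, hall, fun v π h0 hπ hcons =>
    h0 ▸ Justification.infWonBy_of_consistent hS.1 hall hπ (h0 ▸ hcons)⟩

end ParityGame

end
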